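/- arXiv:2501.16117 — 3 statements merged into one kernel-verified Lean document; each statement's English description precedes it below -/
import Mathlib

section
/- (Reordering lemma) Let z_0,...,z_{N-1} be vectors in a normed space, π a permutation, ε_i ∈ {-1,+1} signs, and let π' be the permutation that lists first the indices π(n) with ε_n = +1 (in order) followed by the indices π(n) with ε_n = -1 (in reverse order). Then max_{n∈[N]} ‖Σ_{i=0}^{n-1} z_{π'(i)}‖ ≤ (1/2)·max_{n∈[N]} ‖Σ_{i=0}^{n-1} z_{π(i)}‖ + (1/2)·max_{n∈[N]} ‖Σ_{i=0}^{n-1} ε_i·z_{π(i)}‖ + ‖Σ_{i=0}^{N-1} z_i‖. -/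
lemma ivt_aux (c : ℕ → ℕ) (h0 : c 0 = 0) (hstep : ∀ m, c (m+1) ≤ c m + 1) :
    ∀ M n, n ≤ c M → ∃ m ≤ M, c m = n := by
  intro M
  induction M with
  | zero => intro n hn; exact ⟨0, le_refl 0, by omega⟩
  | succ M ih =>
    intro n hn
    by_cases h : n ≤ c M
    · obtain ⟨m, hm, he⟩ := ih n h
      exact ⟨m, hm.trans (Nat.le_succ M), he⟩
    · exact ⟨M+1, le_refl _, by have := hstep M; omega⟩

lemma count_step {N : ℕ} (r : Fin N → Bool) (m : ℕ) :
    ((List.finRange N).take (m+1)).countP r ≤ ((List.finRange N).take m).countP r + 1 := by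
  rw [List.take_succ, List.countP_append]
  have : ((List.finRange N)[m]?.toList).countP r ≤ ((List.finRange N)[m]?.toList).length :=
    List.countP_le_length
  have h2 : ((List.finRange N)[m]?.toList).length ≤ 1 := by
    cases h : (List.finRange N)[m]? <;> simp [h]
  omega

lemma mem_take_finRange {N : ℕ} (m : ℕ) (i : Fin N) :
    i ∈ (List.finRange N).take m ↔ (i : ℕ) < m := by
  rw [List.mem_take_iff_getElem]
  constructor
  · rintro ⟨j, hj, rfl⟩
    simp only [List.getElem_finRange, Fin.cast]
    exact lt_of_lt_of_le hj (by simp)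
  · intro h
    refine ⟨(i : ℕ), by simp; omega, ?_⟩
    simp [List.getElem_finRange, Fin.ext_iff]

lemma take_count_filter {N : ℕ} (r : Fin N → Bool) (m : ℕ) :
    ((List.finRange N).filter r).take (((List.finRange N).take m).countP r)
      = ((List.finRange N).take m).filter r := by
  rw [List.countP_eq_length_filter]
  nth_rewrite 2 [← List.take_append_drop m (List.finRange N)]
  rw [List.filter_append, List.take_left]

lemma sum_filter_take {N : ℕ} {E : Type*} [AddCommGroup E]
    (r : Fin N → Bool) (f : Fin N → E) (m : ℕ)
    [DecidablePred fun i : Fin N => (i:ℕ) < m ∧ r i = true] :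
    ((((List.finRange N).take m).filter r).map f).sum
      = ∑ i ∈ Finset.univ.filter (fun i : Fin N => (i:ℕ) < m ∧ r i = true), f i := by
  classical
  have hnd : (((List.finRange N).take m).filter r).Nodup :=
    (((List.filter_sublist).trans (List.take_sublist m _))).nodup (List.nodup_finRange N)
  rw [← List.sum_toFinset _ hnd]
  apply Finset.sum_congr _ (fun _ _ => rfl)
  ext i
  simp [List.mem_filter, mem_take_finRange]

open Finset in
lemma half_sum_pos {N : ℕ} {E : Type*} [NormedAddCommGroup E] [NormedSpace ℝ E]
    (z : Fin N → E) (π : Fin N → Fin N) (ε : Fin N → ℝ) (hε : ∀ i, ε i = 1 ∨ ε i = -1)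
    (m : ℕ) :
    ∑ i ∈ univ.filter (fun i : Fin N => (i:ℕ) < m ∧ ε i = 1), z (π i)
      = (2⁻¹:ℝ) • ((∑ i ∈ univ.filter (fun i : Fin N => (i:ℕ) < m), z (π i))
          + ∑ i ∈ univ.filter (fun i : Fin N => (i:ℕ) < m), ε i • z (π i)) := by
  classical
  rw [← Finset.filter_filter, Finset.sum_filter, ← Finset.sum_add_distrib, Finset.smul_sum]
  refine Finset.sum_congr rfl fun i _ => ?_
  rcases hε i with h | h
  · rw [if_pos h, h, one_smul, ← two_smul ℝ, smul_smul]
    norm_num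
  · rw [if_neg (by rw [h]; norm_num), h, neg_one_smul, add_neg_cancel, smul_zero]

open Finset in
lemma half_sum_neg {N : ℕ} {E : Type*} [NormedAddCommGroup E] [NormedSpace ℝ E]
    (z : Fin N → E) (π : Fin N → Fin N) (ε : Fin N → ℝ) (hε : ∀ i, ε i = 1 ∨ ε i = -1)
    (m : ℕ) :
    ∑ i ∈ univ.filter (fun i : Fin N => (i:ℕ) < m ∧ ε i = -1), z (π i)
      = (2⁻¹:ℝ) • ((∑ i ∈ univ.filter (fun i : Fin N => (i:ℕ) < m), z (π i))
          - ∑ i ∈ univ.filter (fun i : Fin N => (i:ℕ) < m), ε i • z (π i)) := by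
  classical
  rw [← Finset.filter_filter, Finset.sum_filter, ← Finset.sum_sub_distrib, Finset.smul_sum]
  refine Finset.sum_congr rfl fun i _ => ?_
  rcases hε i with h | h
  · rw [if_neg (by rw [h]; norm_num), h, one_smul, sub_self, smul_zero]
  · rw [if_pos h, h, neg_one_smul, sub_neg_eq_add, ← two_smul ℝ, smul_smul]
    norm_num

open Classical in
theorem stmt_5 {E : Type*} [NormedAddCommGroup E] [NormedSpace ℝ E]
    (N : ℕ) (hN : 1 ≤ N) (z : Fin N → E) (π : Fin N → Fin N) (hπ : Function.Bijective π)
    (ε : Fin N → ℝ) (hε : ∀ i, ε i = 1 ∨ ε i = -1)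
    (π' : Fin N → Fin N)
    (hπ' : ∀ i : Fin N,
      (((List.finRange N).filter (fun n => decide (ε n = 1))).map π
        ++ (((List.finRange N).filter (fun n => decide (ε n = -1))).reverse).map π)[(i : ℕ)]?
        = some (π' i)) :
    ∀ n, 1 ≤ n → n ≤ N →
      ‖∑ i ∈ Finset.univ.filter (fun i : Fin N => (i : ℕ) < n), z (π' i)‖
        ≤ (1/2) * (Finset.Icc 1 N).sup' (Finset.nonempty_Icc.mpr hN)
              (fun m => ‖∑ i ∈ Finset.univ.filter (fun i : Fin N => (i : ℕ) < m), z (π i)‖)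
          + (1/2) * (Finset.Icc 1 N).sup' (Finset.nonempty_Icc.mpr hN)
              (fun m => ‖∑ i ∈ Finset.univ.filter (fun i : Fin N => (i : ℕ) < m), ε i • z (π i)‖)
          + ‖∑ i, z i‖ := by
  intro n hn1 hnN
  set pb : Fin N → Bool := fun i => decide (ε i = 1) with hpb
  set qb : Fin N → Bool := fun i => decide (ε i = -1) with hqb
  set lP := (List.finRange N).filter pb with hlPdef
  set lM := (List.finRange N).filter qb with hlMdef
  set L := lP.map π ++ lM.reverse.map π with hLdef
  -- S and T abbreviations (as plain lambdas)
  set S : ℕ → E := fun m => ∑ i ∈ Finset.univ.filter (fun i : Fin N => (i : ℕ) < m), z (π i)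
    with hSdef
  set T : ℕ → E := fun m => ∑ i ∈ Finset.univ.filter (fun i : Fin N => (i : ℕ) < m),
      ε i • z (π i) with hTdef
  set A := (Finset.Icc 1 N).sup' (Finset.nonempty_Icc.mpr hN) (fun m => ‖S m‖) with hAdef
  set B := (Finset.Icc 1 N).sup' (Finset.nonempty_Icc.mpr hN) (fun m => ‖T m‖) with hBdef
  have hA : ∀ m, 1 ≤ m → m ≤ N → ‖S m‖ ≤ A := fun m h1 h2 =>
    Finset.le_sup' (fun m => ‖S m‖) (Finset.mem_Icc.mpr ⟨h1, h2⟩)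
  have hB : ∀ m, 1 ≤ m → m ≤ N → ‖T m‖ ≤ B := fun m h1 h2 =>
    Finset.le_sup' (fun m => ‖T m‖) (Finset.mem_Icc.mpr ⟨h1, h2⟩)
  have hA0 : (0:ℝ) ≤ A := le_trans (norm_nonneg _) (hA 1 le_rfl hN)
  have hB0 : (0:ℝ) ≤ B := le_trans (norm_nonneg _) (hB 1 le_rfl hN)
  -- length facts
  have hlen : lP.length + lM.length = N := by
    have h1 := List.length_eq_length_filter_add (l := List.finRange N) pb
    have h2 : (List.finRange N).filter (fun x => !pb x) = lM := by
      apply List.filter_congr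
      intro i _
      rcases hε i with h | h <;> simp [hpb, hqb, h] <;> norm_num
    rw [h2, ← hlPdef] at h1
    simp only [List.length_finRange] at h1
    omega
  have hLlen : L.length = N := by
    simp only [hLdef, List.length_append, List.length_map, List.length_reverse]
    exact hlen
  -- L = ofFn π'
  have hLofFn : L = List.ofFn π' := by
    apply List.ext_getElem?
    intro i
    by_cases h : i < N
    · have h1 := hπ' ⟨i, h⟩
      rw [h1]
      symm
      have hh : i < (List.ofFn π').length := by rw [List.length_ofFn]; exact h
      rw [List.getElem?_eq_getElem hh, List.getElem_ofFn]
    · rw [List.getElem?_eq_none (by omega),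
        List.getElem?_eq_none (by rw [List.length_ofFn]; omega)]
  -- LHS as a list sum
  have hLHS : ∑ i ∈ Finset.univ.filter (fun i : Fin N => (i : ℕ) < n), z (π' i)
      = ((L.take n).map z).sum := by
    rw [← List.sum_take_ofFn (fun i => z (π' i)) n]
    have : (List.ofFn fun i => z (π' i)) = L.map z := by
      rw [hLofFn, List.map_ofFn]; rfl
    rw [this, ← List.map_take]
  -- generic: filtered-take sums
  have hsumP : ∀ m : ℕ, ((((List.finRange N).take m).filter pb).map (z ∘ π)).sum
      = (2⁻¹:ℝ) • (S m + T m) := by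
    intro m
    rw [sum_filter_take pb (z ∘ π) m, ← half_sum_pos z π ε hε m]
    apply Finset.sum_congr _ (fun _ _ => rfl)
    apply Finset.filter_congr
    intro i _
    simp [hpb]
  have hsumM : ∀ m : ℕ, ((((List.finRange N).take m).filter qb).map (z ∘ π)).sum
      = (2⁻¹:ℝ) • (S m - T m) := by
    intro m
    rw [sum_filter_take qb (z ∘ π) m, ← half_sum_neg z π ε hε m]
    apply Finset.sum_congr _ (fun _ _ => rfl)
    apply Finset.filter_congr
    intro i _
    simp [hqb]
  have htakeN : (List.finRange N).take N = List.finRange N :=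
    List.take_of_length_le (by simp)
  -- total sum
  have htotal : (lP.map (z ∘ π)).sum + (lM.map (z ∘ π)).sum
      = ∑ i, z i := by
    have h1 : (lP.map (z ∘ π)).sum = (2⁻¹:ℝ) • (S N + T N) := by
      rw [hlPdef, ← htakeN]; exact hsumP N
    have h2 : (lM.map (z ∘ π)).sum = (2⁻¹:ℝ) • (S N - T N) := by
      rw [hlMdef, ← htakeN]; exact hsumM N
    rw [h1, h2, ← smul_add]
    have : S N + T N + (S N - T N) = (2:ℝ) • S N := by
      rw [two_smul]; abel
    rw [this, smul_smul]
    norm_num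
    have : S N = ∑ i, z (π i) := by
      rw [hSdef]
      apply Finset.sum_congr _ (fun _ _ => rfl)
      simp [Finset.filter_true_of_mem, Fin.is_lt]
    rw [this]
    exact Fintype.sum_bijective π hπ (fun i => z (π i)) z (fun _ => rfl)
  -- counting functions
  have hcP0 : ((List.finRange N).take 0).countP pb = 0 := by simp
  have hcQ0 : ((List.finRange N).take 0).countP qb = 0 := by simp
  have hcPN : ((List.finRange N).take N).countP pb = lP.length := by
    rw [htakeN, List.countP_eq_length_filter]
  have hcQN : ((List.finRange N).take N).countP qb = lM.length := by
    rw [htakeN, List.countP_eq_length_filter]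
  by_cases hcase : n ≤ lP.length
  · -- positive-part prefix
    obtain ⟨m, hmN, hcm⟩ := ivt_aux (fun m => ((List.finRange N).take m).countP pb) hcP0
      (count_step pb) N n (by show n ≤ ((List.finRange N).take N).countP pb; rw [hcPN]; exact hcase)
    have hm1 : 1 ≤ m := by
      rcases Nat.eq_zero_or_pos m with rfl | h
      · rw [hcP0] at hcm; omega
      · exact h
    have htake : L.take n = (lP.take n).map π := by
      rw [hLdef, List.take_append_of_le_length (by simpa using hcase), List.map_take]
    have hval : ((L.take n).map z).sum = (2⁻¹:ℝ) • (S m + T m) := by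
      rw [htake, List.map_map, ← hcm, hlPdef, take_count_filter pb m]
      exact hsumP m
    rw [hLHS, hval]
    have : ‖(2⁻¹:ℝ) • (S m + T m)‖ ≤ 2⁻¹ * (‖S m‖ + ‖T m‖) := by
      rw [norm_smul]
      simp only [norm_inv, Real.norm_ofNat]
      gcongr
      exact norm_add_le _ _
    have hSm := hA m hm1 hmN
    have hTm := hB m hm1 hmN
    have hz : (0:ℝ) ≤ ‖∑ i, z i‖ := norm_nonneg _
    linarith
  · -- negative-part prefix included
    push_neg at hcase
    have hkle : n - lP.length ≤ lM.length := by omega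
    have htake : L.take n = lP.map π ++ ((lM.drop (N - n)).reverse.map π) := by
      rw [hLdef, List.take_append,
        List.take_of_length_le (by simp; omega)]
      congr 1
      rw [← List.map_take, List.take_reverse, List.map_reverse, List.map_reverse]
      congr 2
      simp only [List.length_map, List.length_reverse]
      have he : lM.length - (n - lP.length) = N - n := by omega
      rw [he]
    have hdropsum : ((lM.drop (N - n)).map (z ∘ π)).sum
        = (lM.map (z ∘ π)).sum - ((lM.take (N - n)).map (z ∘ π)).sum := by
      have : (lM.map (z ∘ π)).sum
          = ((lM.take (N - n)).map (z ∘ π)).sum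
            + ((lM.drop (N - n)).map (z ∘ π)).sum := by
        rw [← List.sum_append, ← List.map_append, List.take_append_drop]
      rw [this]; abel
    have hval : ((L.take n).map z).sum
        = ∑ i, z i - ((lM.take (N - n)).map (z ∘ π)).sum := by
      rw [htake, List.map_append, List.sum_append, List.map_map, List.map_map,
        List.map_reverse, List.sum_reverse]
      rw [hdropsum, ← htotal]
      abel
    by_cases hj : N - n = 0
    · rw [hLHS, hval, hj]
      simp only [List.take_zero, List.map_nil, List.sum_nil, sub_zero]
      have : (0:ℝ) ≤ 1/2 * A + 1/2 * B := by positivity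
      linarith
    · obtain ⟨m, hmN, hcm⟩ := ivt_aux (fun m => ((List.finRange N).take m).countP qb) hcQ0
        (count_step qb) N (N - n)
        (by show N - n ≤ ((List.finRange N).take N).countP qb; rw [hcQN]; omega)
      have hm1 : 1 ≤ m := by
        rcases Nat.eq_zero_or_pos m with rfl | h
        · rw [hcQ0] at hcm; omega
        · exact h
      have hsub : ((lM.take (N - n)).map (z ∘ π)).sum = (2⁻¹:ℝ) • (S m - T m) := by
        rw [← hcm, hlMdef, take_count_filter qb m]
        exact hsumM m
      rw [hLHS, hval, hsub]
      have hnorm : ‖∑ i, z i - (2⁻¹:ℝ) • (S m - T m)‖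
          ≤ ‖∑ i, z i‖ + 2⁻¹ * (‖S m‖ + ‖T m‖) := by
        refine le_trans (norm_sub_le _ _) ?_
        gcongr
        rw [norm_smul]
        simp only [norm_inv, Real.norm_ofNat]
        gcongr
        exact norm_sub_le _ _
      have hSm := hA m hm1 hmN
      have hTm := hB m hm1 hmN
      linarith
end

section
/- (Pair reordering bound) Let N be even, z_i vectors in a normed space, π a permutation, ε̃_j ∈ {-1,+1}, and signs ε_{2j} = ε̃_j, ε_{2j+1} = -ε̃_j. Suppose ‖Σ_{j=0}^{l-1} ε̃_j·(z_{π(2j)} - z_{π(2j+1)})‖ ≤ 2Ca for all l ∈ {1,...,N/2} and ‖Σ_{i=0}^{N-1} z_i‖ ≤ b. If π' lists the positively-signed indices first then negatively-signed indices in reverse, then max_{n∈[N]} ‖Σ_{i=0}^{n-1} z_{π'(i)}‖ ≤ (1/2)·max_{n∈[N]} ‖Σ_{i=0}^{n-1} z_{π(i)}‖ + Ca + b. -/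
open Classical in
theorem stmt_7 {E : Type*} [NormedAddCommGroup E] [NormedSpace ℝ E]
    (N M : ℕ) (hNM : N = 2 * M) (hN : 1 ≤ N)
    (z : ℕ → E) (π : ℕ → ℕ) (hπ : Set.BijOn π (Set.Iio N) (Set.Iio N))
    (εt ε : ℕ → ℝ) (hεt : ∀ j, εt j = 1 ∨ εt j = -1)
    (hpair : ∀ j, ε (2*j) = εt j ∧ ε (2*j+1) = -εt j)
    (C a b : ℝ) (hC : 0 ≤ C) (ha : 0 ≤ a) (hb : 0 ≤ b)
    (hbal : ∀ l, 1 ≤ l → l ≤ M →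
      ‖∑ j ∈ Finset.range l, εt j • (z (π (2*j)) - z (π (2*j+1)))‖ ≤ 2 * C * a)
    (hsum : ‖∑ i ∈ Finset.range N, z i‖ ≤ b)
    (π' : ℕ → ℕ)
    (hπ' : ∀ i < N,
      (((List.range N).filter (fun n => decide (ε n = 1))).map π
        ++ (((List.range N).filter (fun n => decide (ε n = -1))).reverse).map π)[i]?
        = some (π' i)) :
    ∀ n, 1 ≤ n → n ≤ N →
      ‖∑ i ∈ Finset.range n, z (π' i)‖
        ≤ (1/2) * (Finset.Icc 1 N).sup' (Finset.nonempty_Icc.mpr hN)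
            (fun m => ‖∑ i ∈ Finset.range m, z (π i)‖) + C * a + b := by
  set Mx := (Finset.Icc 1 N).sup' (Finset.nonempty_Icc.mpr hN)
      (fun m => ‖∑ i ∈ Finset.range m, z (π i)‖) with hMxdef
  have hM1 : 1 ≤ M := by omega
  set p : ℕ → ℕ := fun j => if εt j = 1 then 2*j else 2*j+1 with hp
  set q : ℕ → ℕ := fun j => if εt j = 1 then 2*j+1 else 2*j with hq
  -- filtered lists are explicit
  have hfilter : ∀ K, ((List.range (2*K)).filter (fun n => decide (ε n = 1)))
        = (List.range K).map p ∧
      ((List.range (2*K)).filter (fun n => decide (ε n = -1)))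
        = (List.range K).map q := by
    intro K
    induction K with
    | zero => simp
    | succ K ih =>
      have h2 : 2*(K+1) = (2*K+1)+1 := by ring
      rw [h2, List.range_succ, List.range_succ, List.range_succ]
      rw [List.filter_append, List.filter_append, List.filter_append, List.filter_append,
        List.map_append]
      obtain ⟨h1, h2'⟩ := hpair K
      rcases hεt K with h | h
      · constructor
        · simp [ih.1, h1, h2', h, hp] <;> norm_num [h1, h2', h]
        · simp [ih.2, h1, h2', h, hq] <;> norm_num [h1, h2', h]
      · constructor
        · simp [ih.1, h1, h2', h, hp] <;> norm_num [h1, h2', h]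
        · simp [ih.2, h1, h2', h, hq] <;> norm_num [h1, h2', h]
  have hfP := (hfilter M).1
  have hfQ := (hfilter M).2
  -- pointwise formulas for π'
  have hA : ∀ i, i < M → π' i = π (p i) := by
    intro i hi
    have h := hπ' i (by omega)
    rw [hNM, hfP, hfQ] at h
    rw [List.getElem?_append_left (by simp [hi]), List.getElem?_map, List.getElem?_map,
      List.getElem?_range hi] at h
    simpa using h.symm
  have hB : ∀ i, M ≤ i → i < N → π' i = π (q (N - 1 - i)) := by
    intro i hMi hi
    have h := hπ' i hi
    rw [hNM, hfP, hfQ] at h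
    rw [List.getElem?_append_right (by simp [hMi]), List.getElem?_map,
      List.getElem?_reverse (by simp; omega), List.getElem?_map] at h
    simp only [List.length_map, List.length_range] at h
    rw [List.getElem?_range (by omega)] at h
    have he : M - 1 - (i - M) = N - 1 - i := by omega
    rw [he] at h
    simpa using h.symm
  -- pair value identities
  have hzp : ∀ j, z (π (p j)) = (2:ℝ)⁻¹ • (z (π (2*j)) + z (π (2*j+1)))
      + (2:ℝ)⁻¹ • (εt j • (z (π (2*j)) - z (π (2*j+1)))) := by
    intro j
    rcases hεt j with h | h <;> simp only [hp, h] <;> norm_num <;> module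
  have hzq : ∀ j, z (π (q j)) = (2:ℝ)⁻¹ • (z (π (2*j)) + z (π (2*j+1)))
      - (2:ℝ)⁻¹ • (εt j • (z (π (2*j)) - z (π (2*j+1)))) := by
    intro j
    rcases hεt j with h | h <;> simp only [hq, h] <;> norm_num <;> module
  have hsplit : ∀ (f : ℕ → E) (l : ℕ), ∑ i ∈ Finset.range (2*l), f i
      = ∑ j ∈ Finset.range l, (f (2*j) + f (2*j+1)) := by
    intro f l
    induction l with
    | zero => simp
    | succ l ih =>
      rw [show 2*(l+1) = 2*l+1+1 by ring, Finset.sum_range_succ, Finset.sum_range_succ,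
        Finset.sum_range_succ, ih]
      abel
  -- bounds
  have hMx0 : 0 ≤ Mx := by
    have h := Finset.le_sup' (fun m => ‖∑ i ∈ Finset.range m, z (π i)‖)
      (Finset.mem_Icc.mpr ⟨le_refl 1, hN⟩)
    exact le_trans (norm_nonneg _) h
  have hAl : ∀ l, l ≤ M → ‖∑ i ∈ Finset.range (2*l), z (π i)‖ ≤ Mx := by
    intro l hl
    rcases Nat.eq_zero_or_pos l with h0 | h0
    · simp [h0, hMx0]
    · exact Finset.le_sup' (fun m => ‖∑ i ∈ Finset.range m, z (π i)‖)
        (Finset.mem_Icc.mpr ⟨by omega, by omega⟩)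
  have hD : ∀ l, l ≤ M → ‖∑ j ∈ Finset.range l, εt j • (z (π (2*j)) - z (π (2*j+1)))‖
      ≤ 2 * C * a := by
    intro l hl
    rcases Nat.eq_zero_or_pos l with h0 | h0
    · simp [h0]; positivity
    · exact hbal l h0 hl
  have hSp : ∀ l, l ≤ M → ‖∑ j ∈ Finset.range l, z (π (p j))‖ ≤ (1/2) * Mx + C * a := by
    intro l hl
    have e : ∑ j ∈ Finset.range l, z (π (p j))
        = (2:ℝ)⁻¹ • (∑ i ∈ Finset.range (2*l), z (π i))
          + (2:ℝ)⁻¹ • (∑ j ∈ Finset.range l, εt j • (z (π (2*j)) - z (π (2*j+1)))) := by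
      rw [hsplit (fun i => z (π i)) l, Finset.smul_sum, Finset.smul_sum,
        ← Finset.sum_add_distrib]
      exact Finset.sum_congr rfl fun j _ => hzp j
    rw [e]
    have h1 := norm_add_le ((2:ℝ)⁻¹ • (∑ i ∈ Finset.range (2*l), z (π i)))
      ((2:ℝ)⁻¹ • (∑ j ∈ Finset.range l, εt j • (z (π (2*j)) - z (π (2*j+1)))))
    rw [norm_smul, norm_smul] at h1
    have h2 := hAl l hl
    have h3 := hD l hl
    have h4 : ‖(2:ℝ)⁻¹‖ = 1/2 := by norm_num [Real.norm_eq_abs]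
    rw [h4] at h1
    nlinarith [norm_nonneg (∑ i ∈ Finset.range (2*l), z (π i))]
  have hSq : ∀ l, l ≤ M → ‖∑ j ∈ Finset.range l, z (π (q j))‖ ≤ (1/2) * Mx + C * a := by
    intro l hl
    have e : ∑ j ∈ Finset.range l, z (π (q j))
        = (2:ℝ)⁻¹ • (∑ i ∈ Finset.range (2*l), z (π i))
          - (2:ℝ)⁻¹ • (∑ j ∈ Finset.range l, εt j • (z (π (2*j)) - z (π (2*j+1)))) := by
      rw [hsplit (fun i => z (π i)) l, Finset.smul_sum, Finset.smul_sum,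
        ← Finset.sum_sub_distrib]
      exact Finset.sum_congr rfl fun j _ => hzq j
    rw [e]
    have h1 := norm_sub_le ((2:ℝ)⁻¹ • (∑ i ∈ Finset.range (2*l), z (π i)))
      ((2:ℝ)⁻¹ • (∑ j ∈ Finset.range l, εt j • (z (π (2*j)) - z (π (2*j+1)))))
    rw [norm_smul, norm_smul] at h1
    have h2 := hAl l hl
    have h3 := hD l hl
    have h4 : ‖(2:ℝ)⁻¹‖ = 1/2 := by norm_num [Real.norm_eq_abs]
    rw [h4] at h1
    nlinarith [norm_nonneg (∑ i ∈ Finset.range (2*l), z (π i))]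
  -- tail formula
  have hTail : ∀ m, M ≤ m → m ≤ N → ∑ i ∈ Finset.Ico m N, z (π' i)
      = ∑ j ∈ Finset.range (N - m), z (π (q j)) := by
    intro m hMm hmN
    rw [Finset.sum_Ico_eq_sum_range]
    have h1 : ∀ k ∈ Finset.range (N - m), z (π' (m + k)) = z (π (q ((N - m) - 1 - k))) := by
      intro k hk
      rw [Finset.mem_range] at hk
      rw [hB (m + k) (by omega) (by omega), show N - 1 - (m + k) = (N - m) - 1 - k by omega]
    rw [Finset.sum_congr rfl h1]
    exact Finset.sum_range_reflect (fun j => z (π (q j))) (N - m)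
  -- full sum
  have hbij : ∑ i ∈ Finset.range N, z (π i) = ∑ i ∈ Finset.range N, z i := by
    apply Finset.sum_nbij π
    · intro x hx
      rw [Finset.mem_range] at *
      exact hπ.mapsTo (by simpa using hx)
    · rw [Finset.coe_range]; exact hπ.injOn
    · rw [Finset.coe_range]; exact hπ.surjOn
    · intros; rfl
  have hfull : ∑ i ∈ Finset.range N, z (π' i) = ∑ i ∈ Finset.range N, z i := by
    have h1 : ∑ i ∈ Finset.range N, z (π' i)
        = ∑ i ∈ Finset.range M, z (π' i) + ∑ i ∈ Finset.Ico M N, z (π' i) := by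
      rw [Finset.range_eq_Ico, ← Finset.sum_Ico_consecutive _ (Nat.zero_le M) (by omega),
        ← Finset.range_eq_Ico]
    rw [h1, hTail M (le_refl M) (by omega),
      Finset.sum_congr rfl (fun i hi => by rw [hA i (Finset.mem_range.mp hi)]),
      show N - M = M by omega, ← Finset.sum_add_distrib]
    have h2 : ∀ j ∈ Finset.range M, z (π (p j)) + z (π (q j)) = z (π (2*j)) + z (π (2*j+1)) := by
      intro j _
      rcases hεt j with h | h <;> simp only [hp, hq, h] <;> norm_num <;> abel
    rw [Finset.sum_congr rfl h2, ← hsplit (fun i => z (π i)) M, ← hNM, hbij]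
  -- main
  intro n hn1 hnN
  by_cases hnM : n ≤ M
  · have e : ∑ i ∈ Finset.range n, z (π' i) = ∑ j ∈ Finset.range n, z (π (p j)) :=
      Finset.sum_congr rfl fun i hi => by rw [hA i (lt_of_lt_of_le (Finset.mem_range.mp hi) hnM)]
    rw [e]
    have := hSp n hnM
    linarith
  · push_neg at hnM
    have e : ∑ i ∈ Finset.range n, z (π' i)
        = (∑ i ∈ Finset.range N, z i) - ∑ j ∈ Finset.range (N - n), z (π (q j)) := by
      have h1 : ∑ i ∈ Finset.range N, z (π' i)
          = ∑ i ∈ Finset.range n, z (π' i) + ∑ i ∈ Finset.Ico n N, z (π' i) := by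
        rw [Finset.range_eq_Ico, ← Finset.sum_Ico_consecutive _ (Nat.zero_le n) hnN,
          ← Finset.range_eq_Ico]
      rw [hfull] at h1
      rw [hTail n (by omega) hnN] at h1
      rw [h1]; abel
    rw [e]
    have h2 := hSq (N - n) (by omega)
    have h3 := norm_sub_le (∑ i ∈ Finset.range N, z i) (∑ j ∈ Finset.range (N - n), z (π (q j)))
    linarith
end

section
/- (Parameter drift bound for SGD) Consider iterates x^{n+1} = x^n - γ·∇f_{π(n)}(x^n) for n = 0,...,N-1 starting at x^0, where each f_i : R^d → R is differentiable with L-Lipschitz gradient (in a fixed norm ‖·‖). Let φ̄ = max_{n∈[N]} ‖Σ_{i=0}^{n-1}(∇f_{π(i)}(x^0) - ∇f(x^0))‖ with f = (1/N)Σ f_i. If γLN ≤ 1/32, then max_{n∈[N]} ‖x^n - x^0‖ ≤ (32/31)γφ̄ + (32/31)γN‖∇f(x^0)‖. -/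
theorem stmt_10 {E : Type*} [NormedAddCommGroup E] [NormedSpace ℝ E]
    (N : ℕ) (hN : 1 ≤ N) (g : Fin N → E → E) (L γ : ℝ) (hL : 0 ≤ L) (hγ : 0 ≤ γ)
    (hLip : ∀ i x y, ‖g i x - g i y‖ ≤ L * ‖x - y‖)
    (π : Equiv.Perm (Fin N)) (x : ℕ → E)
    (hx : ∀ n : Fin N, x ((n : ℕ) + 1) = x (n : ℕ) - γ • g (π n) (x (n : ℕ)))
    (hstep : γ * L * N ≤ 1/32) :
    ∀ n, 1 ≤ n → n ≤ N →
      ‖x n - x 0‖ ≤ (32/31) * γ *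
          ((Finset.Icc 1 N).sup' (Finset.nonempty_Icc.mpr hN)
            (fun m => ‖∑ i ∈ Finset.univ.filter (fun i : Fin N => (i : ℕ) < m),
                (g (π i) (x 0) - (N : ℝ)⁻¹ • ∑ j, g j (x 0))‖))
        + (32/31) * γ * N * ‖(N : ℝ)⁻¹ • ∑ j, g j (x 0)‖ := by
  set v : E := (N : ℝ)⁻¹ • ∑ j, g j (x 0) with hv
  set Φ : ℝ := (Finset.Icc 1 N).sup' (Finset.nonempty_Icc.mpr hN)
      (fun m => ‖∑ i ∈ Finset.univ.filter (fun i : Fin N => (i : ℕ) < m),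
          (g (π i) (x 0) - v)‖) with hΦ
  have hΦ0 : (0:ℝ) ≤ Φ := by
    have h1 : (1:ℕ) ∈ Finset.Icc 1 N := by simp [hN]
    have := Finset.le_sup' (f := fun m => ‖∑ i ∈ Finset.univ.filter (fun i : Fin N => (i : ℕ) < m),
          (g (π i) (x 0) - v)‖) h1
    exact le_trans (norm_nonneg _) this
  set A : ℝ := γ * Φ + γ * N * ‖v‖ with hA
  have hA0 : 0 ≤ A := by positivity
  -- filter insert lemma
  have hfilt : ∀ (n : ℕ) (hn : n < N),
      (Finset.univ.filter (fun i : Fin N => (i : ℕ) < n + 1)) =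
      insert (⟨n, hn⟩ : Fin N) (Finset.univ.filter (fun i : Fin N => (i : ℕ) < n)) := by
    intro n hn
    ext i
    simp [Nat.lt_succ_iff_lt_or_eq, Fin.ext_iff, or_comm]
    exact Nat.le_iff_lt_or_eq.trans or_comm
  have hcard : ∀ n : ℕ, n ≤ N →
      (Finset.univ.filter (fun i : Fin N => (i : ℕ) < n)).card = n := by
    intro n hn
    induction n with
    | zero => simp
    | succ m ih =>
      have hm : m < N := hn
      rw [hfilt m hm, Finset.card_insert_of_notMem (by simp), ih (le_of_lt hm)]
  have hsum : ∀ n : ℕ, n ≤ N →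
      x n - x 0 = -(γ • ∑ i ∈ Finset.univ.filter (fun i : Fin N => (i : ℕ) < n),
        g (π i) (x (i : ℕ))) := by
    intro n hn
    induction n with
    | zero => simp
    | succ m ih =>
      have hm : m < N := hn
      have hxm := hx ⟨m, hm⟩
      simp only [Fin.val_mk] at hxm
      rw [hfilt m hm, Finset.sum_insert (by simp)]
      have := ih (le_of_lt hm)
      rw [hxm]
      rw [smul_add]
      have h2 : x m - γ • g (π ⟨m, hm⟩) (x m) - x 0
          = (x m - x 0) - γ • g (π ⟨m, hm⟩) (x m) := by abel
      rw [h2, this]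
      abel
  have key : ∀ n : ℕ, n ≤ N → ‖x n - x 0‖ ≤ (32/31) * A := by
    intro n
    induction n using Nat.strong_induction_on with
    | _ n ih =>
      intro hn
      rcases Nat.eq_zero_or_pos n with rfl | hn1
      · simpa using by positivity
      set F := Finset.univ.filter (fun i : Fin N => (i : ℕ) < n) with hF
      have hcF : F.card = n := hcard n hn
      have hnorm : ‖x n - x 0‖ = γ * ‖∑ i ∈ F, g (π i) (x (i : ℕ))‖ := by
        rw [hsum n hn, norm_neg, norm_smul, Real.norm_eq_abs, abs_of_nonneg hγ]
      have hdecomp : (∑ i ∈ F, g (π i) (x (i : ℕ)))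
          = (∑ i ∈ F, (g (π i) (x (i : ℕ)) - g (π i) (x 0)))
            + (∑ i ∈ F, (g (π i) (x 0) - v)) + F.card • v := by
        simp only [Finset.sum_sub_distrib, Finset.sum_const]
        abel
      have hb1 : ‖∑ i ∈ F, (g (π i) (x (i : ℕ)) - g (π i) (x 0))‖
          ≤ n * (L * ((32/31) * A)) := by
        calc ‖∑ i ∈ F, (g (π i) (x (i : ℕ)) - g (π i) (x 0))‖
            ≤ ∑ i ∈ F, ‖g (π i) (x (i : ℕ)) - g (π i) (x 0)‖ := norm_sum_le _ _
          _ ≤ ∑ i ∈ F, (L * ((32/31) * A)) := by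
              refine Finset.sum_le_sum fun i hi => ?_
              have hi' : (i : ℕ) < n := by simpa [hF] using hi
              refine le_trans (hLip (π i) _ _) ?_
              exact mul_le_mul_of_nonneg_left
                (ih (i : ℕ) hi' (le_trans (le_of_lt hi') hn)) hL
          _ = n * (L * ((32/31) * A)) := by
              simp [hcF]
      have hb2 : ‖∑ i ∈ F, (g (π i) (x 0) - v)‖ ≤ Φ := by
        have hmem : n ∈ Finset.Icc 1 N := by simp [Finset.mem_Icc, hn]; omega
        exact Finset.le_sup' (f := fun m => ‖∑ i ∈ Finset.univ.filter (fun i : Fin N => (i : ℕ) < m),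
          (g (π i) (x 0) - v)‖) hmem
      have hb3 : ‖(F.card • v : E)‖ = (n : ℝ) * ‖v‖ := by
        rw [hcF, ← Nat.cast_smul_eq_nsmul ℝ, norm_smul, Real.norm_natCast]
      have hS : ‖∑ i ∈ F, g (π i) (x (i : ℕ))‖
          ≤ n * (L * ((32/31) * A)) + Φ + n * ‖v‖ := by
        rw [hdecomp]
        refine le_trans (norm_add_le _ _) ?_
        refine add_le_add (le_trans (norm_add_le _ _) (add_le_add hb1 hb2)) ?_
        rw [hb3]
      rw [hnorm]
      have hnN : (n : ℝ) ≤ (N : ℝ) := by exact_mod_cast hn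
      have hγLn : γ * L * n ≤ 1/32 := by
        refine le_trans ?_ hstep
        exact mul_le_mul_of_nonneg_left hnN (by positivity)
      have h1 : γ * ‖∑ i ∈ F, g (π i) (x (i : ℕ))‖
          ≤ γ * (n * (L * ((32/31) * A)) + Φ + n * ‖v‖) :=
        mul_le_mul_of_nonneg_left hS hγ
      refine le_trans h1 ?_
      have h2 : γ * (n * (L * ((32/31) * A))) ≤ (1/32) * ((32/31) * A) := by
        have : γ * (n * (L * ((32/31) * A))) = (γ * L * n) * ((32/31) * A) := by ring
        rw [this]
        exact mul_le_mul_of_nonneg_right hγLn (by positivity)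
      have h3 : γ * (n * ‖v‖) ≤ γ * (N * ‖v‖) := by
        refine mul_le_mul_of_nonneg_left ?_ hγ
        exact mul_le_mul_of_nonneg_right hnN (norm_nonneg _)
      rw [mul_add, mul_add, hA]
      have hA' : A = γ * Φ + γ * ↑N * ‖v‖ := hA
      nlinarith [h2, h3, hA0]
  intro n h1 h2
  have := key n h2
  calc ‖x n - x 0‖ ≤ (32/31) * A := this
    _ = (32/31) * γ * Φ + (32/31) * γ * N * ‖v‖ := by rw [hA]; ring
end
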